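/- Let D be an m×n real matrix, λ_F ≥ 0, λ_L ≥ 0, λ_NI ≥ 0, and let Y be a random vector in ℝⁿ on a probability space such that each Y_i, each β̂^{FLNI}_i(Y, λ_F, λ_L, λ_NI), and each β̂^{FL}_i(Y − (λ_NI/2)Dᵀ1, λ_NI/2 + λ_F, λ_L) is square-integrable (so all covariances below are defined). Set Y' = Y − (λ_NI/2)Dᵀ1. Then Σ_{i=1}^n Cov[β̂^{FLNI}_i(Y, λ_F, λ_L, λ_NI), Y_i] = Σ_{i=1}^n Cov[β̂^{FL}_i(Y', λ_NI/2 + λ_F, λ_L), Y'_i]; that is, the (covariance) degrees of freedom of the fused lasso nearly-isotonic estimator equals that of the fused lasso estimator applied to the shifted data. -/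

import Mathlib

open Finset MeasureTheory ProbabilityTheory

/-- The fused lasso nearly-isotonic objective
`F(β) = (1/2)‖y − β‖₂² + λ_F Σ_j |(Dβ)_j| + λ_L Σ_i |β_i| + λ_NI Σ_j max((Dβ)_j, 0)`. -/
noncomputable def flniObj {n m : ℕ} (D : Matrix (Fin m) (Fin n) ℝ)
    (y : Fin n → ℝ) (lF lL lNI : ℝ) (β : Fin n → ℝ) : ℝ :=
  (1 / 2) * ∑ i, (y i - β i) ^ 2 + lF * ∑ j, |D.mulVec β j|
    + lL * ∑ i, |β i| + lNI * ∑ j, max (D.mulVec β j) 0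

/-- `Cov[U, V] = E[UV] − E[U]E[V]`. -/
noncomputable def cov {Ω : Type*} [MeasureSpace Ω] (U V : Ω → ℝ) : ℝ :=
  (∫ ω, U ω * V ω) - (∫ ω, U ω) * (∫ ω, V ω)

/-!
Since `max x 0 = (|x| + x) / 2` and `∑ⱼ (Dβ)ⱼ = ⟪Dᵀ1, β⟫`, the nearly-isotonic penalty is a fused
lasso penalty of weight `λ_NI / 2` plus the linear term `(λ_NI / 2) ⟪Dᵀ1, β⟫`, and completing the
square absorbs that linear term into the data. So, as functions of `β`, the FLNI objective at `y`
and the FL objective at `y − (λ_NI / 2) Dᵀ1` differ by a constant; both are strictly convex, hence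
have the same minimizer. Shifting `Y` by a constant vector leaves the covariances unchanged.
-/

open Matrix

section Convexity

variable {𝕜 E β ι : Type*} [Semiring 𝕜] [PartialOrder 𝕜] [AddCommMonoid E]
  [AddCommMonoid β] [PartialOrder β] [IsOrderedAddMonoid β] [SMul 𝕜 E] [Module 𝕜 β]
  {s : Set E}

theorem ConvexOn.finsetSum {t : Finset ι} {f : ι → E → β} (hs : Convex 𝕜 s)
    (hf : ∀ i ∈ t, ConvexOn 𝕜 s (f i)) : ConvexOn 𝕜 s fun x => ∑ i ∈ t, f i x := by
  induction t using Finset.cons_induction with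
  | empty => simpa using convexOn_const (0 : β) hs
  | cons a t _ ih =>
    simp only [sum_cons]
    exact (hf a (mem_cons_self a t)).add (ih fun i hi => hf i (mem_cons_of_mem hi))

end Convexity

theorem StrictConvexOn.const_mul {𝕜 E : Type*} [Field 𝕜] [LinearOrder 𝕜] [IsStrictOrderedRing 𝕜]
    [AddCommMonoid E] [SMul 𝕜 E] {s : Set E} {f : E → 𝕜} {c : 𝕜} (hc : 0 < c)
    (hf : StrictConvexOn 𝕜 s f) : StrictConvexOn 𝕜 s fun x => c * f x :=
  ⟨hf.1, fun x hx y hy hxy a b ha hb hab =>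
    calc c * f (a • x + b • y) < c * (a • f x + b • f y) :=
          mul_lt_mul_of_pos_left (hf.2 hx hy hxy ha hb hab) hc
      _ = a • (c * f x) + b • (c * f y) := by simp only [smul_eq_mul]; ring⟩

theorem strictConvexOn_univ_sum_apply {ι : Type*} [Fintype ι] {f : ι → ℝ → ℝ}
    (hf : ∀ i, StrictConvexOn ℝ Set.univ (f i)) :
    StrictConvexOn ℝ Set.univ fun x : ι → ℝ => ∑ i, f i (x i) := by
  refine ⟨convex_univ, fun x _ y _ hxy a b ha hb hab => ?_⟩
  obtain ⟨i, hi⟩ := Function.ne_iff.mp hxy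
  simp only [smul_eq_mul, mul_sum, ← sum_add_distrib, Pi.add_apply, Pi.smul_apply]
  exact sum_lt_sum (fun j _ => (hf j).convexOn.2 trivial trivial ha.le hb.le hab)
    ⟨i, mem_univ i, (hf i).2 trivial trivial hi ha hb hab⟩

theorem strictConvexOn_univ_sq_sub (c : ℝ) :
    StrictConvexOn ℝ Set.univ fun x : ℝ => (c - x) ^ 2 :=
  LinearOrder.strictConvexOn_of_lt convex_univ fun x _ y _ hxy a b ha hb hab => by
    obtain rfl : b = 1 - a := by linarith
    have hxy' : 0 < (x - y) ^ 2 := by nlinarith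
    simp only [smul_eq_mul]
    nlinarith [mul_pos ha hb]

section FusedLasso

variable {n m : ℕ} (D : Matrix (Fin m) (Fin n) ℝ)

theorem convexOn_univ_sum_comp_mulVec {g : ℝ → ℝ} (hg : ConvexOn ℝ Set.univ g) :
    ConvexOn ℝ Set.univ fun β : Fin n → ℝ => ∑ j, g ((D *ᵥ β) j) :=
  ConvexOn.finsetSum convex_univ fun j _ =>
    hg.comp_linearMap ((LinearMap.proj j).comp D.mulVecLin)

theorem flniObj_strictConvexOn {lF lL lNI : ℝ} (hF : 0 ≤ lF) (hL : 0 ≤ lL) (hNI : 0 ≤ lNI)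
    (y : Fin n → ℝ) : StrictConvexOn ℝ Set.univ (flniObj D y lF lL lNI) := by
  have habs : ConvexOn ℝ Set.univ fun x : ℝ => |x| := convexOn_univ_norm
  have hpos : ConvexOn ℝ Set.univ fun x : ℝ => max x 0 :=
    (convexOn_id convex_univ).sup (convexOn_const 0 convex_univ)
  exact ((((strictConvexOn_univ_sum_apply fun i => strictConvexOn_univ_sq_sub (y i)).const_mul
    one_half_pos).add_convexOn ((convexOn_univ_sum_comp_mulVec D habs).smul hF)).add_convexOn
    ((ConvexOn.finsetSum convex_univ fun i _ => habs.comp_linearMap (LinearMap.proj (R := ℝ) (φ := fun _ : Fin n => ℝ) i)).smul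
      hL)).add_convexOn ((convexOn_univ_sum_comp_mulVec D hpos).smul hNI)

theorem flniObj_minimizer_unique {lF lL lNI : ℝ} (hF : 0 ≤ lF) (hL : 0 ≤ lL) (hNI : 0 ≤ lNI)
    {y a b : Fin n → ℝ} (ha : ∀ β, flniObj D y lF lL lNI a ≤ flniObj D y lF lL lNI β)
    (hb : ∀ β, flniObj D y lF lL lNI b ≤ flniObj D y lF lL lNI β) : a = b :=
  (flniObj_strictConvexOn D hF hL hNI y).eq_of_isMinOn (isMinOn_univ_iff.2 ha)
    (isMinOn_univ_iff.2 hb) trivial trivial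

end FusedLasso

theorem max_zero_eq_half_abs_add (x : ℝ) : max x 0 = (|x| + x) / 2 := by
  rcases le_total x 0 with h | h
  · rw [max_eq_right h, abs_of_nonpos h]; ring
  · rw [max_eq_left h, abs_of_nonneg h]; ring

theorem sum_mulVec_eq_transpose_mulVec_one_dotProduct {n m : ℕ} (D : Matrix (Fin m) (Fin n) ℝ)
    (β : Fin n → ℝ) : ∑ j, (D *ᵥ β) j = (Dᵀ *ᵥ 1) ⬝ᵥ β := by
  rw [mulVec_transpose, ← dotProduct_mulVec, one_dotProduct]

theorem flniObj_eq_flniObj_sub_add {n m : ℕ} (D : Matrix (Fin m) (Fin n) ℝ) (lF lL lNI : ℝ)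
    (y β : Fin n → ℝ) :
    flniObj D y lF lL lNI β =
      flniObj D (y - (lNI / 2) • Dᵀ *ᵥ 1) (lNI / 2 + lF) lL 0 β +
        ((lNI / 2) * ((Dᵀ *ᵥ 1) ⬝ᵥ y) - (1 / 2) * ∑ i, ((lNI / 2) * (Dᵀ *ᵥ 1) i) ^ 2) := by
  set c := Dᵀ *ᵥ 1
  have hpos : ∑ j, max ((D *ᵥ β) j) 0 = ((∑ j, |(D *ᵥ β) j|) + c ⬝ᵥ β) / 2 := by
    simp only [max_zero_eq_half_abs_add, ← sum_div, sum_add_distrib,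
      sum_mulVec_eq_transpose_mulVec_one_dotProduct, c]
  have hsq : (1 / 2 : ℝ) * ∑ i, (y i - β i) ^ 2 + (lNI / 2) * (c ⬝ᵥ β) =
      (1 / 2) * ∑ i, ((y - (lNI / 2) • c) i - β i) ^ 2 + (lNI / 2) * (c ⬝ᵥ y)
        - (1 / 2) * ∑ i, ((lNI / 2) * c i) ^ 2 := by
    simp only [dotProduct, Pi.sub_apply, Pi.smul_apply, smul_eq_mul, mul_sum,
      ← sum_add_distrib, ← sum_sub_distrib]
    exact sum_congr rfl fun i _ => by ring
  unfold flniObj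
  rw [hpos]
  linarith

theorem cov_sub_const_right {Ω : Type*} [MeasureSpace Ω] [IsProbabilityMeasure (ℙ : Measure Ω)]
    {U V : Ω → ℝ} (hU : Integrable U) (hV : Integrable V) (hUV : Integrable (U * V)) (k : ℝ) :
    cov U (fun ω => V ω - k) = cov U V := by
  have hmul : ∫ ω, U ω * (V ω - k) = (∫ ω, U ω * V ω) - k * ∫ ω, U ω := by
    simp only [mul_sub, mul_comm _ k]
    rw [integral_sub (f := fun ω => U ω * V ω) hUV (hU.const_mul k), integral_const_mul]
  have hsub : ∫ ω, (V ω - k) = (∫ ω, V ω) - k := by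
    simp [integral_sub hV (integrable_const k)]
  simp only [cov, hmul, hsub]
  ring

theorem df_flni_eq_df_fl_shifted_general {Ω : Type*} [MeasureSpace Ω]
    [IsProbabilityMeasure (ℙ : Measure Ω)]
    {n m : ℕ} (D : Matrix (Fin m) (Fin n) ℝ)
    (lF lL lNI : ℝ) (hF : 0 ≤ lF) (hL : 0 ≤ lL) (hNI : 0 ≤ lNI)
    (Y Y' : Ω → Fin n → ℝ)
    (hY' : ∀ ω, Y' ω = Y ω - (lNI / 2) • D.transpose.mulVec 1)
    (bFLNI bFL : (Fin n → ℝ) → (Fin n → ℝ))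
    (hbFLNI : ∀ y β, flniObj D y lF lL lNI (bFLNI y) ≤ flniObj D y lF lL lNI β)
    (hbFL : ∀ y β,
      flniObj D y (lNI / 2 + lF) lL 0 (bFL y) ≤ flniObj D y (lNI / 2 + lF) lL 0 β)
    (hY2 : ∀ i, MemLp (fun ω => Y ω i) 2 ℙ)
    (hbFL2 : ∀ i, MemLp (fun ω => bFL (Y' ω) i) 2 ℙ) :
    ∑ i, cov (fun ω => bFLNI (Y ω) i) (fun ω => Y ω i) =
      ∑ i, cov (fun ω => bFL (Y' ω) i) (fun ω => Y' ω i) := by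
  have hsame : ∀ ω, bFLNI (Y ω) = bFL (Y' ω) := fun ω =>
    flniObj_minimizer_unique D hF hL hNI (hbFLNI (Y ω)) fun β => by
      simpa only [flniObj_eq_flniObj_sub_add D lF lL lNI (Y ω), ← hY' ω] using
        add_le_add_left (hbFL (Y' ω) β) _
  refine sum_congr rfl fun i _ => ?_
  have hshift : (fun ω => Y' ω i) = fun ω => Y ω i - (lNI / 2) * (Dᵀ *ᵥ 1) i :=
    funext fun ω => by simp [hY' ω]
  rw [hshift, cov_sub_const_right ((hbFL2 i).integrable one_le_two)
    ((hY2 i).integrable one_le_two) ((hbFL2 i).integrable_mul (hY2 i))]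
  simp only [hsame]

/-- The covariance degrees of freedom of the fused lasso nearly-isotonic estimator
equals that of the fused lasso estimator applied to the shifted data
`Y' = Y − (λ_NI/2)Dᵀ1` at penalties `(λ_NI/2 + λ_F, λ_L)`. -/
theorem df_flni_eq_df_fl_shifted {Ω : Type*} [MeasureSpace Ω]
    [IsProbabilityMeasure (ℙ : Measure Ω)]
    {n m : ℕ} (D : Matrix (Fin m) (Fin n) ℝ)
    (lF lL lNI : ℝ) (hF : 0 ≤ lF) (hL : 0 ≤ lL) (hNI : 0 ≤ lNI)
    (Y Y' : Ω → Fin n → ℝ)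
    (hY' : ∀ ω, Y' ω = Y ω - (lNI / 2) • D.transpose.mulVec 1)
    (bFLNI bFL : (Fin n → ℝ) → (Fin n → ℝ))
    (hbFLNI : ∀ y β, flniObj D y lF lL lNI (bFLNI y) ≤ flniObj D y lF lL lNI β)
    (hbFL : ∀ y β,
      flniObj D y (lNI / 2 + lF) lL 0 (bFL y) ≤ flniObj D y (lNI / 2 + lF) lL 0 β)
    (hY2 : ∀ i, MemLp (fun ω => Y ω i) 2 ℙ)
    (hbFLNI2 : ∀ i, MemLp (fun ω => bFLNI (Y ω) i) 2 ℙ)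
    (hbFL2 : ∀ i, MemLp (fun ω => bFL (Y' ω) i) 2 ℙ) :
    ∑ i, cov (fun ω => bFLNI (Y ω) i) (fun ω => Y ω i) =
      ∑ i, cov (fun ω => bFL (Y' ω) i) (fun ω => Y' ω i) :=
  df_flni_eq_df_fl_shifted_general D lF lL lNI hF hL hNI Y Y' hY' bFLNI bFL hbFLNI hbFL hY2 hbFL2
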